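/- arXiv:2412.17090 — 2 statements merged into one kernel-verified Lean document; each statement's English description precedes it below -/
import Mathlib

section
/- Let S̃ : Sym(3) → ℝ be S_a(C) = ψ(I₁(C), I₄(C)) N⊗N with I₁ = tr C, I₄ = ⟨CN,N⟩, ψ smooth. If ∂ψ/∂I₁ ≢ 0, then the derivative DS_a fails the self-adjointness (major symmetry) condition at some C: there exist symmetric H, K with tr(DS_a(C)[H] K) ≠ tr(DS_a(C)[K] H); hence S_a admits no potential. -/
/-- For the active stress `S_a(C) = ψ(I₁(C), I₄(C)) N ⊗ N` with `I₁ = tr C`,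
`I₄ = ⟨C N, N⟩` and `N` a unit vector: if `∂ψ/∂I₁` is not identically zero, then the
derivative `DS_a` fails the major (self-adjointness) symmetry at some symmetric `C`
against some symmetric `H`, `K`; hence `S_a` admits no potential. -/
theorem active_stress_I1_I4_not_hyperelastic (ψ : ℝ × ℝ → ℝ) (hψ : ContDiff ℝ (⊤ : ℕ∞) ψ)
    (N : Fin 3 → ℝ) (hN : ∑ i, N i ^ 2 = 1)
    (hψ1 : ∃ p : ℝ × ℝ, fderiv ℝ ψ p (1, 0) ≠ 0) :
    ∃ C H K : Fin 3 → Fin 3 → ℝ,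
      (∀ i j, C i j = C j i) ∧ (∀ i j, H i j = H j i) ∧ (∀ i j, K i j = K j i) ∧
      (∑ i, ∑ j,
          (fderiv ℝ (fun C' : Fin 3 → Fin 3 → ℝ => fun i j =>
            ψ (∑ a, C' a a, ∑ a, ∑ c, C' a c * N c * N a) * N i * N j) C H) i j * K j i)
        ≠ (∑ i, ∑ j,
          (fderiv ℝ (fun C' : Fin 3 → Fin 3 → ℝ => fun i j =>
            ψ (∑ a, C' a a, ∑ a, ∑ c, C' a c * N c * N a) * N i * N j) C K) i j * H j i) := by
  classical
  obtain ⟨p, hp⟩ := hψ1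
  have hN' : N 0 ^ 2 + N 1 ^ 2 + N 2 ^ 2 = 1 := by
    simpa [Fin.sum_univ_three] using hN
  -- the linear map C' ↦ (I₁ C', I₄ C')
  set L1 : (Fin 3 → Fin 3 → ℝ) →L[ℝ] ℝ :=
    ∑ a : Fin 3, (ContinuousLinearMap.proj a).comp
      (ContinuousLinearMap.proj a (R := ℝ) (φ := fun _ : Fin 3 => Fin 3 → ℝ)) with hL1
  set L4 : (Fin 3 → Fin 3 → ℝ) →L[ℝ] ℝ :=
    ∑ a : Fin 3, ∑ c : Fin 3, (N c * N a) • ((ContinuousLinearMap.proj c).comp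
      (ContinuousLinearMap.proj a (R := ℝ) (φ := fun _ : Fin 3 => Fin 3 → ℝ))) with hL4
  set L : (Fin 3 → Fin 3 → ℝ) →L[ℝ] ℝ × ℝ := L1.prod L4 with hL
  set M : ℝ →L[ℝ] (Fin 3 → Fin 3 → ℝ) :=
    (ContinuousLinearMap.id ℝ ℝ).smulRight (fun i j => N i * N j) with hM
  have hLval : ∀ X : Fin 3 → Fin 3 → ℝ,
      L X = (∑ a, X a a, ∑ a, ∑ c, X a c * N c * N a) := by
    intro X
    refine Prod.ext ?_ ?_
    · simp [hL, hL1, ContinuousLinearMap.sum_apply]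
    · simp [hL, hL4, ContinuousLinearMap.sum_apply]
      exact Finset.sum_congr rfl fun a _ => Finset.sum_congr rfl fun c _ => by ring
  have hMval : ∀ (y : ℝ) (i j : Fin 3), M y i j = y * (N i * N j) := by
    intro y i j
    simp [hM]
  set g : (Fin 3 → Fin 3 → ℝ) → (Fin 3 → Fin 3 → ℝ) := fun C' => fun i j =>
    ψ (∑ a, C' a a, ∑ a, ∑ c, C' a c * N c * N a) * N i * N j with hg
  have hgM : g = fun C' => M (ψ (L C')) := by
    funext C' i j
    rw [hg]
    simp only [hMval, hLval]
    ring
  have hfder : ∀ C' : Fin 3 → Fin 3 → ℝ,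
      fderiv ℝ g C' = M.comp ((fderiv ℝ ψ (L C')).comp L) := by
    intro C'
    rw [hgM]
    exact (M.hasFDerivAt.comp C'
      (((hψ.differentiable (by simp) (L C')).hasFDerivAt).comp C' L.hasFDerivAt)).fderiv
  -- the witnesses
  set Cm : Fin 3 → Fin 3 → ℝ := fun i j =>
    (if i = j then (p.1 - p.2) / 2 else 0) + (3 * p.2 - p.1) / 2 * (N i * N j) with hCm
  set Hm : Fin 3 → Fin 3 → ℝ := fun i j => if i = j then 1 else 0 with hHm
  set Km : Fin 3 → Fin 3 → ℝ := fun i j => N i * N j with hKm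
  have hLC : L Cm = p := by
    rw [hLval]
    refine Prod.ext ?_ ?_
    · simp [hCm, Fin.sum_univ_three]
      linear_combination ((3 * p.2 - p.1) / 2) * hN'
    · simp [hCm, Fin.sum_univ_three]
      linear_combination ((p.1 - p.2) / 2 + (3 * p.2 - p.1) / 2 *
        (N 0 ^ 2 + N 1 ^ 2 + N 2 ^ 2 + 1)) * hN'
  have hLH : L Hm = (3, 1) := by
    rw [hLval]
    refine Prod.ext ?_ ?_
    · simp [hHm, Fin.sum_univ_three]
    · simp [hHm, Fin.sum_univ_three]
      linear_combination hN'
  have hLK : L Km = (1, 1) := by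
    rw [hLval]
    refine Prod.ext ?_ ?_
    · simp only [hKm, Fin.sum_univ_three]
      linear_combination hN'
    · simp only [hKm, Fin.sum_univ_three]
      linear_combination (N 0 ^ 2 + N 1 ^ 2 + N 2 ^ 2 + 1) * hN'
  set D : ℝ × ℝ →L[ℝ] ℝ := fderiv ℝ ψ p with hD
  refine ⟨Cm, Hm, Km, ?_, ?_, ?_, ?_⟩
  · intro i j
    by_cases h : i = j
    · subst h; ring
    · rw [hCm]
      simp only
      rw [if_neg h, if_neg fun hh => h hh.symm]
      ring
  · intro i j
    by_cases h : i = j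
    · subst h; rfl
    · rw [hHm]
      simp only
      rw [if_neg h, if_neg fun hh => h hh.symm]
  · intro i j; rw [hKm]; simp only; ring
  · -- the asymmetry
    have hsum1 : (∑ i, ∑ j, (fderiv ℝ g Cm Hm) i j * Km j i) = D (3, 1) := by
      simp only [hfder, ContinuousLinearMap.comp_apply, hLC, hLH, ← hD]
      simp [hMval, hKm, Fin.sum_univ_three]
      linear_combination (D (3, 1)) * (N 0 ^ 2 + N 1 ^ 2 + N 2 ^ 2 + 1) * hN'
    have hsum2 : (∑ i, ∑ j, (fderiv ℝ g Cm Km) i j * Hm j i) = D (1, 1) := by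
      simp only [hfder, ContinuousLinearMap.comp_apply, hLC, hLK, ← hD]
      simp [hMval, hHm, Fin.sum_univ_three]
      linear_combination (D (1, 1)) * hN'
    have hexp : D (3, 1) = D (1, 1) + 2 * D (1, 0) := by
      have h2 : ((3 : ℝ), (1 : ℝ)) = (1, 1) + (2 : ℝ) • ((1 : ℝ), (0 : ℝ)) := by
        norm_num [Prod.ext_iff]
      rw [h2, map_add, map_smul, smul_eq_mul]
    show (∑ i, ∑ j, (fderiv ℝ g Cm Hm) i j * Km j i)
        ≠ (∑ i, ∑ j, (fderiv ℝ g Cm Km) i j * Hm j i)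
    rw [hsum1, hsum2, hexp]
    intro heq
    apply hp
    show D (1, 0) = 0
    linarith
end

section
/- Consider the Kirchhoff-stress constitutive law τ(h) = 2μ J(h) h + λ J(h) log J(h) · I on symmetric 3×3 matrices h, where J(h) = det(exp h) = exp(tr h). If μ ≠ 0, the derivative Dτ fails major symmetry: there exist symmetric H, K with tr(Dτ(h)[H] K) ≠ tr(Dτ(h)[K] H) for some h, because Dτ(h)[H] contains the term 2μ J (tr H) h whose pairing gives 2μJ(tr H)tr(hK), not symmetric in (H,K) unless h is a multiple of the identity. Hence Hencky's 1928 model is not hyperelastic. -/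
/-! With `J = exp (tr h)`, so that `log J = tr h`, the derivative is
`Dτ(h)[H] = 2μJ (H + (tr H) h) + λJ (1 + tr h) (tr H) I`. Under the trace pairing with `K` every
term is symmetric in `(H, K)` except `2μJ (tr H) ⟨h, K⟩`, so major symmetry fails whenever
`(tr H) ⟨h, K⟩ ≠ (tr K) ⟨h, H⟩`, e.g. for `h = K = e₀₀` and `H = I`. -/

open Real

namespace Hencky

variable {ι : Type*} [Fintype ι] [DecidableEq ι]

def traceCLM : (ι → ι → ℝ) →L[ℝ] ℝ :=
  ∑ a, (ContinuousLinearMap.proj (R := ℝ) (φ := fun _ : ι => ℝ) a).comp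
    (ContinuousLinearMap.proj (φ := fun _ : ι => ι → ℝ) a)

omit [DecidableEq ι] in
theorem traceCLM_apply (h : ι → ι → ℝ) : traceCLM h = ∑ a, h a a := by
  simp [traceCLM]

omit [DecidableEq ι] in
theorem hasFDerivAt_trace (h : ι → ι → ℝ) :
    HasFDerivAt (fun h' : ι → ι → ℝ => ∑ a, h' a a) traceCLM h := by
  convert traceCLM.hasFDerivAt using 1
  ext h'
  exact (traceCLM_apply h').symm

noncomputable def henckyStress (μ lam : ℝ) (h : ι → ι → ℝ) : ι → ι → ℝ := fun i j =>
  2 * μ * exp (∑ a, h a a) * h i j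
    + lam * exp (∑ a, h a a) * log (exp (∑ a, h a a)) * (if i = j then (1 : ℝ) else 0)

theorem henckyStress_eq_smul (μ lam : ℝ) :
    henckyStress (ι := ι) μ lam = fun h =>
      (2 * μ * exp (∑ a, h a a)) • h
        + (lam * exp (∑ a, h a a) * ∑ a, h a a) • fun i j => if i = j then (1 : ℝ) else 0 := by
  ext h i j
  simp [henckyStress, log_exp]

theorem fderiv_henckyStress_apply (μ lam : ℝ) (h H : ι → ι → ℝ) :
    fderiv ℝ (henckyStress μ lam) h H =
      (2 * μ * exp (∑ a, h a a)) • (H + (∑ a, H a a) • h)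
        + (lam * exp (∑ a, h a a) * (1 + ∑ a, h a a) * ∑ a, H a a) •
            fun i j => if i = j then (1 : ℝ) else 0 := by
  have htr := hasFDerivAt_trace h
  have hJ := htr.exp
  have hderiv := (((hJ.const_mul (2 * μ)).fun_smul (hasFDerivAt_id (𝕜 := ℝ) h)).fun_add
    (((hJ.const_mul lam).fun_mul htr).smul_const fun i j : ι => if i = j then (1 : ℝ) else 0))
  simp only [id] at hderiv
  rw [henckyStress_eq_smul, hderiv.fderiv]
  simp only [add_apply, smul_apply,
    ContinuousLinearMap.smulRight_apply, ContinuousLinearMap.id_apply, traceCLM_apply]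
  module

def tracePairing (A B : ι → ι → ℝ) : ℝ := ∑ i, ∑ j, A i j * B j i

omit [DecidableEq ι] in
theorem tracePairing_comm (A B : ι → ι → ℝ) : tracePairing A B = tracePairing B A := by
  unfold tracePairing
  rw [Finset.sum_comm]
  simp only [mul_comm]

theorem tracePairing_fderiv_henckyStress (μ lam : ℝ) (h H K : ι → ι → ℝ) :
    tracePairing (fderiv ℝ (henckyStress μ lam) h H) K =
      2 * μ * exp (∑ a, h a a) * (tracePairing H K + (∑ a, H a a) * tracePairing h K)
        + lam * exp (∑ a, h a a) * (1 + ∑ a, h a a) * (∑ a, H a a) * ∑ a, K a a := by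
  rw [fderiv_henckyStress_apply]
  simp [tracePairing, add_mul, mul_add, Finset.sum_add_distrib, Finset.mul_sum, mul_assoc]

theorem tracePairing_fderiv_henckyStress_ne {μ : ℝ} (lam : ℝ) (hμ : μ ≠ 0) {h H K : ι → ι → ℝ}
    (hasymm : (∑ a, H a a) * tracePairing h K ≠ (∑ a, K a a) * tracePairing h H) :
    tracePairing (fderiv ℝ (henckyStress μ lam) h H) K ≠
      tracePairing (fderiv ℝ (henckyStress μ lam) h K) H := by
  rw [tracePairing_fderiv_henckyStress, tracePairing_fderiv_henckyStress, tracePairing_comm K H]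
  intro heq
  apply hasymm
  have hJ : 2 * μ * exp (∑ a, h a a) ≠ 0 := by positivity
  apply mul_left_cancel₀ hJ
  linear_combination heq

end Hencky

/-- Hencky's 1928 model `τ(h) = 2μ J(h) h + λ J(h) log J(h) · I`, with
`J(h) = det(exp h) = exp(tr h)` on symmetric 3×3 logarithmic strains `h`, is not
hyperelastic when `μ ≠ 0`: the derivative `Dτ` fails the major (trace-pairing)
symmetry at some symmetric `h` against some symmetric `H`, `K`. -/
theorem hencky_model_not_hyperelastic (μ lam : ℝ) (hμ : μ ≠ 0) :
    ∃ h H K : Fin 3 → Fin 3 → ℝ,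
      (∀ i j, h i j = h j i) ∧ (∀ i j, H i j = H j i) ∧ (∀ i j, K i j = K j i) ∧
      (∑ i, ∑ j,
          (fderiv ℝ (fun h' : Fin 3 → Fin 3 → ℝ => fun i j =>
            2 * μ * Real.exp (∑ a, h' a a) * h' i j
              + lam * Real.exp (∑ a, h' a a) * Real.log (Real.exp (∑ a, h' a a)) *
                (if i = j then (1 : ℝ) else 0)) h H) i j * K j i)
        ≠ (∑ i, ∑ j,
          (fderiv ℝ (fun h' : Fin 3 → Fin 3 → ℝ => fun i j =>
            2 * μ * Real.exp (∑ a, h' a a) * h' i j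
              + lam * Real.exp (∑ a, h' a a) * Real.log (Real.exp (∑ a, h' a a)) *
                (if i = j then (1 : ℝ) else 0)) h K) i j * H j i) := by
  let E₀₀ : Fin 3 → Fin 3 → ℝ := fun i j => if i = 0 ∧ j = 0 then 1 else 0
  let I : Fin 3 → Fin 3 → ℝ := fun i j => if i = j then 1 else 0
  refine ⟨E₀₀, I, E₀₀, fun i j => by simp [E₀₀, and_comm], fun i j => by simp [I, eq_comm],
    fun i j => by simp [E₀₀, and_comm], Hencky.tracePairing_fderiv_henckyStress_ne lam hμ ?_⟩
  simp [E₀₀, I, Hencky.tracePairing, Fin.sum_univ_three]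
end
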